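/- Let G be a finite, 2-connected, claw-free graph in which every induced paw (with pendant vertex a₁ and the two triangle vertices b₁, b₂ non-adjacent to a₁) satisfies that a₁ has a common neighbour outside the paw with b₁ or with b₂. Then either G is pancyclic or G is a cycle. -/

import Mathlib

open SimpleGraph

/-- The claw `K_{1,3}`: vertex `0` is the centre, adjacent to `1`, `2`, `3`. -/
def claw : SimpleGraph (Fin 4) := SimpleGraph.fromRel (fun a _ => a = 0)

/-- The paw: a triangle on `1, 2, 3` with pendant vertex `0` attached to `1`. -/
def paw : SimpleGraph (Fin 4) :=
  SimpleGraph.fromRel (fun a b => (a = 0 ∧ b = 1) ∨ (a ≠ 0 ∧ b ≠ 0))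

/-- `G` is `H`-free: no induced subgraph of `G` is isomorphic to `H`.
(`H ↪g G` is a graph embedding, i.e. an isomorphism onto an induced subgraph.) -/
def HFree {W V : Type*} (H : SimpleGraph W) (G : SimpleGraph V) : Prop :=
  ¬ Nonempty (H ↪g G)

/-- `G` is 2-connected: at least 3 vertices, connected, and deleting any vertex
leaves it connected. -/
def TwoConnected {V : Type*} (G : SimpleGraph V) : Prop :=
  (∃ a b c : V, a ≠ b ∧ a ≠ c ∧ b ≠ c) ∧ G.Connected ∧
    ∀ v : V, (G.induce {u | u ≠ v}).Connected

/-- The hypothesis that every induced paw of `G`, with pendant vertex `a₁` adjacent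
precisely to the triangle vertex `a₀`, satisfies `φ(a₁,b₁)` or `φ(a₁,b₂)`:
`a₁` has a common neighbour outside the paw with `b₁` or with `b₂`. -/
def PawCondition {V : Type*} (G : SimpleGraph V) : Prop :=
  ∀ a₁ a₀ b₁ b₂ : V,
    G.Adj a₁ a₀ → G.Adj a₀ b₁ → G.Adj a₀ b₂ → G.Adj b₁ b₂ →
    ¬ G.Adj a₁ b₁ → ¬ G.Adj a₁ b₂ → a₁ ≠ b₁ → a₁ ≠ b₂ →
    ∃ x, x ∉ ({a₁, a₀, b₁, b₂} : Set V) ∧ G.Adj x a₁ ∧ (G.Adj x b₁ ∨ G.Adj x b₂)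

/-- A ray (one-way infinite path) in `G`, given by its sequence of vertices. -/
def IsRay {V : Type*} (G : SimpleGraph V) (f : ℕ → V) : Prop :=
  Function.Injective f ∧ ∀ n, G.Adj (f n) (f (n + 1))

/-- Two rays are equivalent (belong to the same end) if no finite vertex set
separates them. -/
def EndEquiv {V : Type*} (G : SimpleGraph V) (f g : ℕ → V) : Prop :=
  ∀ S : Set V, S.Finite →
    ∃ (m n : ℕ) (p : G.Walk (f m) (g n)), ∀ x ∈ p.support, x ∉ S

/-- The ends of `G`, as equivalence classes of rays. -/
def Ends {V : Type*} (G : SimpleGraph V) : Type _ :=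
  Quot (fun f g : {f : ℕ → V // IsRay G f} => EndEquiv G f.1 g.1)

/-- The edge cut `δ(X)`. -/
def edgeCut {V : Type*} (G : SimpleGraph V) (X : Set V) : Set (Sym2 V) :=
  {e | e ∈ G.edgeSet ∧ ∃ a b, e = s(a, b) ∧ a ∈ X ∧ b ∉ X}

/-- `G` has a Hamilton circle in its Freudenthal compactification `|G|`,
expressed combinatorially: there is a spanning edge set `C` in which every
vertex has degree exactly `2` and which meets every finite cut of `G` in a
positive even number of edges (for locally finite connected `G` this
characterises edge sets whose closure in `|G|` is a circle through all
vertices). -/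
def HasHamiltonCircle {V : Type*} (G : SimpleGraph V) : Prop :=
  ∃ C ⊆ G.edgeSet, (∀ v : V, {e ∈ C | v ∈ e}.ncard = 2) ∧
    ∀ X : Set V, X.Nonempty → Xᶜ.Nonempty → (edgeCut G X).Finite →
      (C ∩ edgeCut G X).Nonempty ∧ Even ((C ∩ edgeCut G X).ncard)

/-- The end represented by the ray `g` lies in the closure (in `|G|`) of the
vertex set `M`: for every finite `S`, the component of `G - S` containing a
tail of `g` meets `M`. -/
def EndInClosure {V : Type*} (G : SimpleGraph V) (g : ℕ → V) (M : Set V) : Prop :=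
  ∀ S : Set V, S.Finite → ∃ u ∈ M, ∃ N : ℕ, ∀ n ≥ N,
    ∃ p : G.Walk u (g n), ∀ x ∈ p.support, x ∉ S

/-- `S` is a vertex separator of `G`: `G - S` is disconnected. -/
def IsSeparator {V : Type*} (G : SimpleGraph V) (S : Set V) : Prop :=
  ∃ (u : V) (hu : u ∉ S) (v : V) (hv : v ∉ S),
    ¬ (G.induce {x | x ∉ S}).Reachable ⟨u, hu⟩ ⟨v, hv⟩

/-- `S` is a minimal vertex separator of `G`. -/
def IsMinSeparator {V : Type*} (G : SimpleGraph V) (S : Set V) : Prop :=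
  IsSeparator G S ∧ ∀ T ⊂ S, ¬ IsSeparator G T

/-- The `k`-blow-up of `G`: each vertex is replaced by a `k`-clique. -/
def blowup {V : Type*} (G : SimpleGraph V) (k : ℕ) : SimpleGraph (V × Fin k) where
  Adj x y := (x.1 = y.1 ∧ x.2 ≠ y.2) ∨ G.Adj x.1 y.1
  symm := ⟨by
    rintro x y (⟨h1, h2⟩ | h)
    · exact Or.inl ⟨h1.symm, h2.symm⟩
    · exact Or.inr h.symm⟩
  loopless := ⟨by
    rintro x (⟨_, h⟩ | h)
    · exact h rfl
    · exact G.irrefl h⟩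

/-!
Let `C` be a cycle of a connected claw-free graph satisfying the paw condition, and let `v` be
a vertex off `C` adjacent to `y` on `C`, with neighbours `a`, `b` of `y` on `C`. If there were no
cycle of length `|C| + 1`, then `v` is adjacent to neither `a` nor `b`, so claw-freeness at `y`
gives the chord `ab`, and the paw `v; y; a, b` yields a vertex `x` adjacent to `v` and, say, `b`.
If `x` lies on `C`, deleting `x` (its cycle neighbours are adjacent, again by claw-freeness) and
reinserting it along `y v x b` gives a longer cycle. If `x` lies off `C`, the ear `y v x b`
together with a vertex `z` of `C` whose cycle neighbours are adjacent gives one as well; this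
forbids outside vertices from touching `C` away from `y` and `b`, which a second paw at `y`
contradicts.

Hence cycles grow one vertex at a time up to `n` vertices. If some vertex has three distinct
neighbours, claw-freeness gives a triangle and `G` is pancyclic. Otherwise `G` has maximum
degree two; 2-connectedness gives a cycle, it grows to a Hamilton cycle, and every edge of `G`
lies on it.
-/

namespace Cycle

variable {α : Type*} {r : α → α → Prop}

theorem coe_append_comm (l₁ l₂ : List α) :
    ((l₁ ++ l₂ : List α) : Cycle α) = (l₂ ++ l₁ : List α) :=
  coe_eq_coe.2 List.isRotated_append

theorem Chain.of_cons {a : α} {l : List α} (h : Chain r (a :: l : List α))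
    (hclose : ∀ x ∈ l.getLast?, ∀ y ∈ l.head?, r x y) : Chain r (l : Cycle α) := by
  rcases l with _ | ⟨b, l⟩
  · exact Chain.nil r
  rw [chain_coe_cons, List.cons_append, List.isChain_cons] at h
  rw [chain_coe_cons, ← List.cons_append, List.isChain_append]
  refine ⟨(List.isChain_append.1 h.2).1, List.isChain_singleton b, ?_⟩
  intro x hx y hy
  exact hclose x hx y (by simpa using hy)

theorem Chain.reverse (hr : ∀ ⦃x y⦄, r x y → r y x) {s : Cycle α} (h : Chain r s) :
    Chain r s.reverse := by
  induction s using Quotient.inductionOn' with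
  | h l =>
    rcases l with _ | ⟨a, l⟩
    · exact Chain.nil r
    change Chain r (a :: l : List α) at h
    rw [show Quotient.mk'' (a :: l) = ((a :: l : List α) : Cycle α) from rfl, reverse_coe,
      List.reverse_cons, ← coe_cons_eq_coe_append, chain_coe_cons]
    rw [chain_coe_cons] at h
    have := List.isChain_reverse.2 (h.imp fun _ _ hxy => hr hxy)
    simpa using this

end Cycle

theorem List.exists_eq_cons_append_singleton {α : Type*} {M : List α} {p q : α}
    (hM : 2 ≤ M.length) (hp : p ∈ M.getLast?) (hq : q ∈ M.head?) :
    ∃ N, M = q :: (N ++ [p]) := by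
  rcases M with _ | ⟨b, N₀⟩
  · simp at hM
  obtain rfl : b = q := by simpa using hq
  have hN₀ : N₀ ≠ [] := by rintro rfl; simp at hM
  rw [List.getLast?_cons_of_ne_nil hN₀] at hp
  obtain ⟨N, rfl⟩ := List.getLast?_eq_some_iff.1 hp
  exact ⟨N, rfl⟩

namespace SimpleGraph

variable {V : Type*} {G : SimpleGraph V}

theorem adj_of_clawFree (hclaw : HFree claw G) {u a b c : V}
    (hua : G.Adj u a) (hub : G.Adj u b) (huc : G.Adj u c) (hab : a ≠ b) (hac : a ≠ c)
    (hbc : b ≠ c) (nab : ¬ G.Adj a b) (nac : ¬ G.Adj a c) : G.Adj b c := by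
  by_contra nbc
  refine hclaw ⟨⟨⟨![u, a, b, c], fun i j h => ?_⟩, fun {i j} => ?_⟩⟩
  · fin_cases i <;> fin_cases j <;> simp_all [eq_comm, hua.ne, hub.ne, huc.ne]
  · change G.Adj (![u, a, b, c] i) (![u, a, b, c] j) ↔ claw.Adj i j
    fin_cases i <;> fin_cases j <;> simp_all [claw, G.adj_comm]

/-- A cycle of `G`, recorded as its cyclic sequence of vertices (a list up to rotation). -/
structure IsVertexCycle (G : SimpleGraph V) (C : Cycle V) : Prop where
  three_le_length : 3 ≤ C.length
  nodup : C.Nodup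
  chain : C.Chain G.Adj

namespace IsVertexCycle

variable {C : Cycle V} {a b p q v w x y z : V} {l M N P Q : List V}

theorem reverse (h : G.IsVertexCycle C) : G.IsVertexCycle C.reverse :=
  ⟨C.length_reverse ▸ h.three_le_length, Cycle.nodup_reverse_iff.2 h.nodup,
    h.chain.reverse fun _ _ hxy => hxy.symm⟩

theorem adj_of_eq_coe (h : G.IsVertexCycle C) (hC : C = (a :: b :: l : List V)) : G.Adj a b := by
  have := h.chain
  rw [hC, Cycle.chain_coe_cons, List.cons_append, List.isChain_cons_cons] at this
  exact this.1

theorem insert (h : G.IsVertexCycle (a :: b :: l : List V)) (hv : v ∉ a :: b :: l)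
    (hav : G.Adj a v) (hvb : G.Adj v b) : G.IsVertexCycle (a :: v :: b :: l : List V) := by
  obtain ⟨-, hnd, hch⟩ := h
  refine ⟨by simp, ?_, ?_⟩
  · simp only [Cycle.nodup_coe_iff, List.nodup_cons, List.mem_cons, not_or] at hnd hv ⊢
    exact ⟨⟨Ne.symm hv.1, hnd.1⟩, hv.2, hnd.2⟩
  · simp only [Cycle.chain_coe_cons, List.cons_append, List.isChain_cons_cons] at hch ⊢
    exact ⟨hav, hvb, hch.2⟩

theorem insert₂ (h : G.IsVertexCycle (a :: b :: l : List V)) (hv : v ∉ a :: b :: l)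
    (hx : x ∉ a :: b :: l) (hne : v ≠ x) (hav : G.Adj a v) (hvx : G.Adj v x)
    (hxb : G.Adj x b) : G.IsVertexCycle (a :: v :: x :: b :: l : List V) := by
  obtain ⟨-, hnd, hch⟩ := h
  refine ⟨by simp, ?_, ?_⟩
  · simp only [Cycle.nodup_coe_iff, List.nodup_cons, List.mem_cons, not_or] at hnd hv hx ⊢
    exact ⟨⟨Ne.symm hv.1, Ne.symm hx.1, hnd.1⟩, ⟨hne, hv.2⟩, hx.2, hnd.2⟩
  · simp only [Cycle.chain_coe_cons, List.cons_append, List.isChain_cons_cons] at hch ⊢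
    exact ⟨hav, hvx, hxb, hch.2⟩

theorem of_cons (h : G.IsVertexCycle (z :: M : List V)) (hM : 3 ≤ M.length)
    (hclose : ∀ x ∈ M.getLast?, ∀ y ∈ M.head?, G.Adj x y) : G.IsVertexCycle (M : Cycle V) :=
  ⟨hM, Cycle.nodup_coe_iff.2 (List.nodup_cons.1 (Cycle.nodup_coe_iff.1 h.nodup)).2,
    h.chain.of_cons hclose⟩

theorem exists_eq_coe (h : G.IsVertexCycle C) (hy : y ∈ C) :
    ∃ a b l, C = (a :: y :: b :: l : List V) := by
  obtain ⟨L, rfl⟩ := Quotient.exists_rep C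
  change y ∈ (L : Cycle V) at hy
  obtain ⟨P, Q, rfl⟩ := List.append_of_mem (Cycle.mem_coe_iff.1 hy)
  have hlen : 3 ≤ (P ++ y :: Q).length := h.three_le_length
  rcases List.eq_nil_or_concat (Q ++ P) with hQP | ⟨R, a, hR⟩
  · simp_all [List.append_eq_nil_iff]
  rcases R with _ | ⟨b, l⟩
  · have := congrArg List.length hR
    simp at this hlen
    omega
  refine ⟨a, b, l, ?_⟩
  change ((P ++ y :: Q : List V) : Cycle V) = _
  rw [Cycle.coe_append_comm, List.cons_append, hR, List.concat_eq_append]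
  simpa using (Cycle.coe_cons_eq_coe_append (y :: b :: l) a).symm

theorem length_le_card [Fintype V] (hC : G.IsVertexCycle C) :
    C.length ≤ Fintype.card V := by
  obtain ⟨L, rfl⟩ := Quotient.exists_rep C
  exact (Cycle.nodup_coe_iff.1 hC.nodup).length_le_card

theorem exists_walk_isCycle (h : G.IsVertexCycle C) :
    ∃ (u : V) (p : G.Walk u u), p.IsCycle ∧ p.length = C.length := by
  obtain ⟨L, rfl⟩ := Quotient.exists_rep C
  have h' : G.IsVertexCycle (L : Cycle V) := h
  rcases L with _ | ⟨a, t⟩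
  · exact absurd h'.three_le_length (by simp)
  have hchain : (a :: (t ++ [a])).IsChain G.Adj := (Cycle.chain_coe_cons _ _ _).1 h'.chain
  have hnd : (t ++ [a]).Nodup :=
    (List.perm_append_singleton a t).nodup_iff.2 (Cycle.nodup_coe_iff.1 h'.nodup)
  have h3 : 2 ≤ t.length := by simpa using h'.three_le_length
  -- The endpoint of `Walk.ofSupport` is a `getLast`, so generalize it before closing up.
  suffices ∀ (u : V) (p : G.Walk a u), u = a → p.support = a :: (t ++ [a]) →
      ∃ (u : V) (p : G.Walk u u), p.IsCycle ∧ p.length = t.length + 1 from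
    this _ (Walk.ofSupport _ (List.cons_ne_nil _ _) hchain) (by simp) (Walk.support_ofSupport _ _)
  rintro u p rfl hp
  have hlen : p.length = t.length + 1 := by simpa [hp] using p.length_support.symm
  refine ⟨_, p, Walk.isCycle_iff_isPath_tail_and_le_length.2 ⟨?_, by omega⟩, hlen⟩
  rw [Walk.isPath_def, Walk.support_tail_of_not_nil _ (Walk.not_nil_iff_lt_length.2 (by omega)),
    hp]
  exact hnd

end IsVertexCycle

theorem Walk.IsCycle.exists_isVertexCycle {u : V} {p : G.Walk u u} (hp : p.IsCycle) :
    ∃ C : Cycle V, G.IsVertexCycle C ∧ C.length = p.length := by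
  have hlen : p.support.dropLast.length = p.length := by simp
  obtain ⟨t, ht⟩ : ∃ t, p.support.dropLast = u :: t := by
    rw [← p.cons_tail_support, List.dropLast_cons_of_ne_nil]
    · exact ⟨_, rfl⟩
    · rw [← List.length_pos_iff, List.length_tail, p.length_support]
      have := hp.three_le_length
      omega
  refine ⟨p.support.dropLast, ⟨by simpa [hlen] using hp.three_le_length,
    Cycle.nodup_coe_iff.2 hp.nodup_dropLast_support, ?_⟩, by simp⟩
  have hchain := p.isChain_adj_support
  rw [← p.dropLast_support_concat, ht] at hchain
  rw [ht, Cycle.chain_coe_cons]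
  simpa using hchain

theorem isVertexCycle_triangle {a b c : V} (hab : G.Adj a b) (hbc : G.Adj b c)
    (hca : G.Adj c a) : G.IsVertexCycle ([a, b, c] : List V) :=
  ⟨by simp, by simp [hab.ne, hbc.ne, hca.ne'], by simp [hab, hbc, hca]⟩

theorem exists_triangle_of_clawFree (hclaw : HFree claw G) {u a b c : V}
    (hua : G.Adj u a) (hub : G.Adj u b) (huc : G.Adj u c) (hab : a ≠ b) (hac : a ≠ c)
    (hbc : b ≠ c) : ∃ C : Cycle V, G.IsVertexCycle C ∧ C.length = 3 := by
  by_cases nab : G.Adj a b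
  · exact ⟨_, isVertexCycle_triangle hua nab hub.symm, rfl⟩
  by_cases nac : G.Adj a c
  · exact ⟨_, isVertexCycle_triangle hua nac huc.symm, rfl⟩
  exact ⟨_, isVertexCycle_triangle hub (adj_of_clawFree hclaw hua hub huc hab hac hbc nab nac)
    huc.symm, rfl⟩

namespace IsVertexCycle

theorem not_adj_of_consecutive (hC : G.IsVertexCycle C)
    (hno : ∀ C' : Cycle V, G.IsVertexCycle C' → C'.length ≠ C.length + 1)
    (hCe : C = (a :: b :: l : List V)) (hw : w ∉ C) (hwa : G.Adj w a) : ¬ G.Adj w b := by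
  subst hCe
  intro hwb
  exact hno _ (hC.insert (by simpa using hw) hwa.symm hwb) (by simp)

theorem adj_of_adj_outside (hclaw : HFree claw G) (hC : G.IsVertexCycle C)
    (hno : ∀ C' : Cycle V, G.IsVertexCycle C' → C'.length ≠ C.length + 1)
    (hCe : C = (p :: z :: q :: N : List V)) (hw : w ∉ C) (hwz : G.Adj w z) : G.Adj p q := by
  have hCe' : C = (z :: q :: (N ++ [p]) : List V) := by
    rw [hCe]; simpa using Cycle.coe_cons_eq_coe_append (z :: q :: N) p
  have hmem : ∀ u ∈ (p :: z :: q :: N), u ∈ C := fun u hu => by simpa [hCe] using hu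
  have hpq : p ≠ q := by
    have := hC.nodup
    rw [hCe, Cycle.nodup_coe_iff] at this
    simp_all
  refine adj_of_clawFree hclaw hwz.symm (hC.adj_of_eq_coe hCe).symm (hC.adj_of_eq_coe hCe')
    ?_ ?_ hpq (fun hwp => not_adj_of_consecutive hC hno hCe hw hwp hwz)
    (not_adj_of_consecutive hC hno hCe' hw hwz)
  · rintro rfl; exact hw (hmem _ (by simp))
  · rintro rfl; exact hw (hmem _ (by simp))

theorem adj_getLast_head_of_adj_outside (hclaw : HFree claw G) (hC : G.IsVertexCycle C)
    (hno : ∀ C' : Cycle V, G.IsVertexCycle C' → C'.length ≠ C.length + 1)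
    (hCe : C = (z :: M : List V)) (hw : w ∉ C) (hwz : G.Adj w z) :
    ∀ p ∈ M.getLast?, ∀ q ∈ M.head?, G.Adj p q := by
  intro p hp q hq
  have hM : 2 ≤ M.length := by simpa [hCe] using hC.three_le_length
  obtain ⟨N, rfl⟩ := List.exists_eq_cons_append_singleton hM hp hq
  refine adj_of_adj_outside hclaw hC hno (N := N) (z := z) ?_ hw hwz
  rw [hCe]; simpa using (Cycle.coe_cons_eq_coe_append (z :: q :: N) p).symm

/-- The ear `y v x b` lengthens `C` by two and skipping `z` shortens it by one. -/
theorem false_of_skip (hC : G.IsVertexCycle C)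
    (hno : ∀ C' : Cycle V, G.IsVertexCycle C' → C'.length ≠ C.length + 1)
    (hCe : C = (y :: b :: (P ++ z :: Q) : List V)) (hv : v ∉ C) (hx : x ∉ C) (hne : v ≠ x)
    (hyv : G.Adj y v) (hvx : G.Adj v x) (hxb : G.Adj x b)
    (hchord : ∀ p ∈ (Q ++ y :: b :: P).getLast?, ∀ q ∈ (Q ++ y :: b :: P).head?,
      G.Adj p q) : False := by
  have hlong := (hCe ▸ hC).insert₂ (by simpa [hCe] using hv) (by simpa [hCe] using hx) hne
    hyv hvx hxb
  rw [show ((y :: v :: x :: b :: (P ++ z :: Q) : List V) : Cycle V) =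
      (z :: (Q ++ y :: v :: x :: b :: P) : List V) by
    simpa using Cycle.coe_append_comm (y :: v :: x :: b :: P) (z :: Q)] at hlong
  refine hno _ (hlong.of_cons (by simp; omega) ?_) (by simp [hCe]; omega)
  intro p hp q hq
  refine hchord p ?_ q ?_
  · simpa [List.getLast?_append, List.getLast?_cons] using hp
  · simpa [List.head?_append] using hq

theorem not_adj_of_detour (hclaw : HFree claw G) (hC : G.IsVertexCycle C)
    (hno : ∀ C' : Cycle V, G.IsVertexCycle C' → C'.length ≠ C.length + 1)
    (hCe : C = (y :: b :: l : List V)) (hv : v ∉ C) (hx : x ∉ C) (hyv : G.Adj y v)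
    (hvx : G.Adj v x) (hxb : G.Adj x b) (hw : w ∉ C) (hz : z ∈ l) : ¬ G.Adj w z := by
  intro hwz
  obtain ⟨P, Q, rfl⟩ := List.append_of_mem hz
  have hCz : C = (z :: (Q ++ y :: b :: P) : List V) := by
    rw [hCe]; simpa using Cycle.coe_append_comm (y :: b :: P) (z :: Q)
  exact false_of_skip hC hno hCe hv hx hvx.ne hyv hvx hxb
    (adj_getLast_head_of_adj_outside hclaw hC hno hCz hw hwz)

theorem false_of_detour_mem (hclaw : HFree claw G) (hC : G.IsVertexCycle C)
    (hno : ∀ C' : Cycle V, G.IsVertexCycle C' → C'.length ≠ C.length + 1)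
    (hCe : C = (a :: y :: b :: l : List V)) (hv : v ∉ C) (hyv : G.Adj y v) (hvx : G.Adj v x)
    (hxb : G.Adj x b) (hx : x ∈ l) : False := by
  obtain ⟨P, Q, rfl⟩ := List.append_of_mem hx
  have hCx : C = (x :: (Q ++ a :: y :: b :: P) : List V) := by
    rw [hCe]; simpa using Cycle.coe_append_comm (a :: y :: b :: P) (x :: Q)
  have hnd : (x :: (Q ++ a :: y :: b :: P)).Nodup := Cycle.nodup_coe_iff.1 (hCx ▸ hC.nodup)
  have hrest : G.IsVertexCycle (Q ++ a :: y :: b :: P : List V) :=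
    (hCx ▸ hC).of_cons (by simp; omega)
      (adj_getLast_head_of_adj_outside hclaw hC hno hCx hv hvx)
  rw [show ((Q ++ a :: y :: b :: P : List V) : Cycle V) =
      (y :: b :: (P ++ Q ++ [a]) : List V) by
    rw [Cycle.coe_append_comm, List.cons_append, Cycle.coe_cons_eq_coe_append]; simp] at hrest
  refine hno _ (hrest.insert₂ (x := x) ?_ ?_ hvx.ne hyv hvx hxb) (by simp [hCe])
  · exact fun h => hv (by simp [hCe] at h ⊢; tauto)
  · simp only [List.nodup_cons, List.mem_append, List.mem_cons] at hnd
    simp only [List.mem_cons, List.mem_append]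
    tauto

theorem false_of_detour_not_mem (hclaw : HFree claw G) (hpaw : PawCondition G)
    (hC : G.IsVertexCycle C)
    (hno : ∀ C' : Cycle V, G.IsVertexCycle C' → C'.length ≠ C.length + 1)
    (hCe : C = (a :: y :: b :: l : List V)) (hv : v ∉ C) (hx : x ∉ C) (hyv : G.Adj y v)
    (hvx : G.Adj v x) (hxb : G.Adj x b) : False := by
  have hCy : C = (y :: b :: (l ++ [a]) : List V) := by
    rw [hCe]; simpa using Cycle.coe_cons_eq_coe_append (y :: b :: l) a
  have hout : ∀ w ∉ C, ∀ z ∈ l ++ [a], ¬ G.Adj w z :=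
    fun w hw z hz => not_adj_of_detour hclaw hC hno hCy hv hx hyv hvx hxb hw hz
  rcases l with _ | ⟨c, l⟩
  · -- `C` is the triangle `a y b`, so the ear can skip `a`.
    refine false_of_skip (P := []) (Q := []) hC hno hCy hv hx hvx.ne hyv hvx hxb ?_
    simpa using (hC.adj_of_eq_coe hCy).symm
  have hnd := hC.nodup
  rw [hCe, Cycle.nodup_coe_iff] at hnd
  have hyc : G.Adj y c := adj_of_adj_outside hclaw hC hno (p := y) (z := b) (w := x)
    (by simpa using hCy) hx hxb
  have hvC : v ≠ a ∧ v ≠ y ∧ v ≠ b ∧ v ≠ c := by simp_all [eq_comm]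
  have hac : G.Adj a c := adj_of_clawFree hclaw hyv (hC.adj_of_eq_coe hCe).symm hyc
    hvC.1 hvC.2.2.2 (by simp_all) (hout v hv a (by simp)) (hout v hv c (by simp))
  obtain ⟨w, hw, hwv, hwac⟩ := hpaw v y a c hyv.symm (hC.adj_of_eq_coe hCe).symm hyc hac
    (hout v hv a (by simp)) (hout v hv c (by simp)) hvC.1 hvC.2.2.2
  simp only [Set.mem_insert_iff, Set.mem_singleton_iff, not_or] at hw
  by_cases hwC : w ∈ C
  · rw [hCe, Cycle.mem_coe_iff] at hwC
    simp only [List.mem_cons, hw, false_or] at hwC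
    rcases hwC with rfl | hwl
    · exact not_adj_of_consecutive hC hno hCy hv hyv.symm hwv.symm
    · exact hout v hv w (by simp [hwl]) hwv.symm
  · rcases hwac with hwa | hwc
    · exact hout w hwC a (by simp) hwa
    · exact hout w hwC c (by simp) hwc

theorem false_of_detour (hclaw : HFree claw G) (hpaw : PawCondition G)
    (hC : G.IsVertexCycle C)
    (hno : ∀ C' : Cycle V, G.IsVertexCycle C' → C'.length ≠ C.length + 1)
    (hCe : C = (a :: y :: b :: l : List V)) (hv : v ∉ C) (hyv : G.Adj y v)
    (hvx : G.Adj v x) (hxb : G.Adj x b) (hxa : x ≠ a) (hxy : x ≠ y) (hxb' : x ≠ b) :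
    False := by
  by_cases hxC : x ∈ C
  · rw [hCe, Cycle.mem_coe_iff] at hxC
    simp only [List.mem_cons, hxa, hxy, hxb', false_or] at hxC
    exact false_of_detour_mem hclaw hC hno hCe hv hyv hvx hxb hxC
  · exact false_of_detour_not_mem hclaw hpaw hC hno hCe hv hxC hyv hvx hxb

theorem exists_length_succ (hclaw : HFree claw G) (hpaw : PawCondition G)
    (hC : G.IsVertexCycle C) (hy : y ∈ C) (hv : v ∉ C) (hyv : G.Adj y v) :
    ∃ C' : Cycle V, G.IsVertexCycle C' ∧ C'.length = C.length + 1 := by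
  by_contra! hno
  obtain ⟨a, b, l, hCe⟩ := hC.exists_eq_coe hy
  have hCy : C = (y :: b :: (l ++ [a]) : List V) := by
    rw [hCe]; simpa using Cycle.coe_cons_eq_coe_append (y :: b :: l) a
  have hva : ¬ G.Adj v a := fun hva => not_adj_of_consecutive hC hno hCe hv hva hyv.symm
  have hvb : ¬ G.Adj v b := not_adj_of_consecutive hC hno hCy hv hyv.symm
  have hab : G.Adj a b := adj_of_adj_outside hclaw hC hno hCe hv hyv.symm
  have hva' : v ≠ a := by rintro rfl; exact hv (by simp [hCe])
  have hvb' : v ≠ b := by rintro rfl; exact hv (by simp [hCe])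
  obtain ⟨x, hx, hxv, hxab⟩ := hpaw v y a b hyv.symm (hC.adj_of_eq_coe hCe).symm
    (hC.adj_of_eq_coe hCy) hab hva hvb hva' hvb'
  simp only [Set.mem_insert_iff, Set.mem_singleton_iff, not_or] at hx
  obtain ⟨-, hxy, hxa, hxb⟩ := hx
  rcases hxab with hxa' | hxb'
  · -- Reversing `C` exchanges the roles of `a` and `b`.
    have hCr : C.reverse = (b :: y :: a :: l.reverse : List V) := by
      rw [hCe, Cycle.reverse_coe]
      simpa using Cycle.coe_append_comm l.reverse [b, y, a]
    exact false_of_detour hclaw hpaw hC.reverse (by simpa using hno) hCr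
      (by simpa using hv) hyv hxv.symm hxa' hxb hxy hxa
  · exact false_of_detour hclaw hpaw hC hno hCe hv hyv hxv.symm hxb' hxa hxy hxb

theorem exists_adj_notMem [Fintype V] (hconn : G.Connected) (hC : G.IsVertexCycle C)
    (hlt : C.length < Fintype.card V) : ∃ y ∈ C, ∃ v ∉ C, G.Adj y v := by
  classical
  obtain ⟨L, rfl⟩ := Quotient.exists_rep C
  change (L : Cycle V).length < _ at hlt
  rw [Cycle.length_coe] at hlt
  obtain ⟨v, -, hv⟩ := Finset.exists_mem_notMem_of_card_lt_card
    (L.toFinset_card_le.trans_lt (hlt.trans_eq Finset.card_univ.symm))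
  obtain ⟨y, hy⟩ : ∃ y, y ∈ L := L.exists_mem_of_ne_nil (by
    rintro rfl; exact absurd hC.three_le_length (by simp))
  obtain ⟨d, -, hd, hd'⟩ := (hconn.preconnected y v).some.exists_boundary_dart {u | u ∈ L} hy
    (by simpa using hv)
  exact ⟨d.fst, Cycle.mem_coe_iff.2 hd, d.snd, fun h => hd' (Cycle.mem_coe_iff.1 h), d.adj⟩

theorem exists_length_eq [Fintype V] (hconn : G.Connected) (hclaw : HFree claw G)
    (hpaw : PawCondition G) (hC : G.IsVertexCycle C) {n : ℕ} (hCn : C.length ≤ n)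
    (hn : n ≤ Fintype.card V) : ∃ C' : Cycle V, G.IsVertexCycle C' ∧ C'.length = n := by
  induction n, hCn using Nat.le_induction with
  | base => exact ⟨C, hC, rfl⟩
  | succ n _ ih =>
    obtain ⟨C', hC', rfl⟩ := ih (by omega)
    obtain ⟨y, hy, v, hv, hyv⟩ := hC'.exists_adj_notMem hconn (by omega)
    exact hC'.exists_length_succ hclaw hpaw hy hv hyv

end IsVertexCycle

theorem Walk.IsCycle.mem_support_of_length_eq_card [Fintype V] {u : V} {p : G.Walk u u}
    (hp : p.IsCycle) (hlen : p.length = Fintype.card V) (v : V) : v ∈ p.support := by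
  by_contra hv
  have hnd : (v :: p.support.tail).Nodup :=
    List.nodup_cons.2 ⟨fun h => hv (List.mem_of_mem_tail h), hp.support_nodup⟩
  have := hnd.length_le_card
  simp [hlen] at this

theorem Walk.IsCycle.mem_edges_of_mem_support {u v w : V} {p : G.Walk u u} (hp : p.IsCycle)
    (hdeg : ¬ ∃ u a b c, G.Adj u a ∧ G.Adj u b ∧ G.Adj u c ∧
      a ≠ b ∧ a ≠ c ∧ b ≠ c)
    (hv : v ∈ p.support) (hvw : G.Adj v w) : s(v, w) ∈ p.edges := by
  obtain ⟨a, b, hab, hnbr⟩ := Set.ncard_eq_two.1 (hp.ncard_neighborSet_toSubgraph_eq_two hv)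
  have ha : p.toSubgraph.Adj v a := by
    rw [← Subgraph.mem_neighborSet, hnbr]; simp
  have hb : p.toSubgraph.Adj v b := by
    rw [← Subgraph.mem_neighborSet, hnbr]; simp
  rw [← Walk.adj_toSubgraph_iff_mem_edges]
  by_cases hwa : w = a
  · exact hwa ▸ ha
  by_cases hwb : w = b
  · exact hwb ▸ hb
  exact (hdeg ⟨v, w, a, b, hvw, ha.adj_sub, hb.adj_sub, hwa, hwb, hab⟩).elim

end SimpleGraph

section TwoConnected

variable {V : Type*} {G : SimpleGraph V}

theorem TwoConnected.exists_adj_adj (h : TwoConnected G) (v : V) :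
    ∃ a b, a ≠ b ∧ G.Adj v a ∧ G.Adj v b := by
  obtain ⟨⟨p, q, r, hpq, hpr, hqr⟩, hconn, hdel⟩ := h
  obtain ⟨u, hu⟩ : ∃ u, u ≠ v := by by_contra! H; exact hpq ((H p).trans (H q).symm)
  set a := (hconn.preconnected v u).some.snd
  have hva : G.Adj v a := Walk.adj_snd (Walk.not_nil_of_ne hu.symm)
  obtain ⟨w, hwv, hwa⟩ : ∃ w, w ≠ v ∧ w ≠ a := by
    by_contra! H
    rcases eq_or_ne p v with rfl | hp
    · exact hqr ((H q hpq.symm).trans (H r hpr.symm).symm)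
    rcases eq_or_ne q v with rfl | hq
    · exact hpr ((H p hp).trans (H r hqr.symm).symm)
    exact hpq ((H p hp).trans (H q hq).symm)
  let W : Walk (G.induce {u | u ≠ a}) ⟨v, hva.ne⟩ ⟨w, hwa⟩ :=
    ((hdel a).preconnected _ _).some
  have hvb := Walk.adj_snd (p := W) (Walk.not_nil_of_ne (by simpa using hwv.symm))
  exact ⟨a, W.snd, fun h => W.snd.2 h.symm, hva, hvb⟩

theorem TwoConnected.exists_isCycle [Fintype V] (h : TwoConnected G) :
    ∃ (u : V) (p : G.Walk u u), p.IsCycle := by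
  classical
  by_contra! hacyc
  have htree : G.IsTree := ⟨h.2.1, fun u p hp => hacyc u p hp⟩
  obtain ⟨p, q, -, hpq, -, -⟩ := h.1
  have : Nontrivial V := ⟨⟨p, q, hpq⟩⟩
  obtain ⟨v, hv⟩ := G.exists_minimal_degree_vertex
  obtain ⟨a, b, hab, hva, hvb⟩ := h.exists_adj_adj v
  have h2 : 1 < G.degree v := by
    rw [← G.card_neighborFinset_eq_degree]
    exact Finset.one_lt_card.2 ⟨a, by simpa, b, by simpa, hab⟩
  have := htree.minDegree_eq_one_of_nontrivial
  omega

end TwoConnected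

/-- Broersma–Veldman: a finite, 2-connected, claw-free graph in which
every induced paw satisfies `φ(a₁,b₁)` or `φ(a₁,b₂)` is pancyclic or a cycle. -/
theorem stmt_15 {V : Type} [Fintype V] (G : SimpleGraph V)
    (h2 : TwoConnected G) (hclaw : HFree claw G) (hpaw : PawCondition G) :
    (∀ s : ℕ, 3 ≤ s → s ≤ Fintype.card V →
      ∃ (a : V) (p : G.Walk a a), p.IsCycle ∧ p.length = s) ∨
    (∃ (a : V) (p : G.Walk a a), p.IsCycle ∧ (∀ v : V, v ∈ p.support) ∧
      ∀ e ∈ G.edgeSet, e ∈ p.edges) := by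
  have hconn := h2.2.1
  by_cases hdeg : ∃ u a b c, G.Adj u a ∧ G.Adj u b ∧ G.Adj u c ∧
      a ≠ b ∧ a ≠ c ∧ b ≠ c
  · obtain ⟨u, a, b, c, hua, hub, huc, hab, hac, hbc⟩ := hdeg
    obtain ⟨C, hC, hC3⟩ := exists_triangle_of_clawFree hclaw hua hub huc hab hac hbc
    refine Or.inl fun s hs hsn => ?_
    obtain ⟨C', hC', rfl⟩ := hC.exists_length_eq hconn hclaw hpaw (hC3 ▸ hs) hsn
    exact hC'.exists_walk_isCycle
  · obtain ⟨u, p, hp⟩ := h2.exists_isCycle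
    obtain ⟨C, hC, -⟩ := hp.exists_isVertexCycle
    obtain ⟨C', hC', hC'n⟩ := hC.exists_length_eq hconn hclaw hpaw hC.length_le_card le_rfl
    obtain ⟨w, q, hq, hqn⟩ := hC'.exists_walk_isCycle
    have hspan := hq.mem_support_of_length_eq_card (hqn.trans hC'n)
    refine Or.inr ⟨w, q, hq, hspan, fun e he => ?_⟩
    induction e using Sym2.ind with
    | _ v x => exact hq.mem_edges_of_mem_support hdeg (hspan v) he
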